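/- arXiv:2207.11656 — 2 statements merged into one kernel-verified Lean document; each statement's English description precedes it below -/
import Mathlib

section
/- Under Assumption 1 (linear price sensitivity), there exists a pricing policy maximizing the relaxed objective C_rel over all positive-recurrent policies (p_i)_{i≥1} with values in [p_min, p_max] (and p_0 = p_max) that has bang-bang form: there exist ℓ* ∈ ℕ ∪ {∞} and p* ∈ [p_min, p_max] such that p_i = p_max for i < ℓ*, p_i = p* for i = ℓ*, and p_i = p_min for i > ℓ*. -/
open scoped ENNReal

/-- `hseq ρ i = ∏_{j=1}^i ρ_j`, with `hseq ρ 0 = 1`. -/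
noncomputable def hseq (ρ : ℕ → ℝ) (i : ℕ) : ℝ := ∏ j ∈ Finset.Icc 1 i, ρ j

/-- Stationary distribution `π_i = h_i / ∑_j h_j` of the birth–death chain. -/
noncomputable def piseq (ρ : ℕ → ℝ) (i : ℕ) : ℝ := hseq ρ i / ∑' j, hseq ρ j

/-- The death-rate ratios induced by a pricing policy under linear price
sensitivity: `ρ_i = λ / (β - α p_i)`. -/
noncomputable def rhoOf (lam beta alpha : ℝ) (p : ℕ → ℝ) (i : ℕ) : ℝ :=
  lam / (beta - alpha * p i)

/-- The relaxed objective `C_rel = ∑_i π_i p_i - (w̃/λ) ∑_i i π_i`, valued in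
`EReal` so that a policy with infinite stationary mean gets value `⊥`. -/
noncomputable def CrelE (lam beta alpha wt : ℝ) (p : ℕ → ℝ) : EReal :=
  ((∑' i, piseq (rhoOf lam beta alpha p) i * p i : ℝ) : EReal) -
    ((ENNReal.ofReal (wt / lam) *
      ∑' i : ℕ, ENNReal.ofReal ((i : ℝ) * piseq (rhoOf lam beta alpha p) i)
        : ℝ≥0∞) : EReal)

/-- Admissible (positive recurrent) pricing policies: prices in
`[p_min, p_max]`, `p_0 = p_max`, and `∑_j h_j < ∞`. -/
def Admissible (lam beta alpha pmin pmax : ℝ) (p : ℕ → ℝ) : Prop :=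
  (∀ i, p i ∈ Set.Icc pmin pmax) ∧ p 0 = pmax ∧
    Summable (hseq (rhoOf lam beta alpha p))

/-!
Write `ρ_i = λ / μ_i ∈ [a, b]` with `a = λ / μ_max < 1`, `b = λ / μ_min`. The price at ratio `ρ`
satisfies `ρ p = (β ρ - λ) / α`, so `h_i p_i = h_{i-1} (β ρ_i - λ) / α` is affine in each `ρ_i`. By
Dinkelbach's reformulation, `C_rel ≤ M` iff `∑ h_i (p_i - w i - M) ≤ 0`, and this sum is bounded,
by telescoping, by `p_0 - M + V 1` for any `V` satisfying the Bellman inequality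
`x (β/α - w k - M + V (k + 1)) - λ/α ≤ V k` for `x ∈ [a, b]` with `h_n V (n + 1) → 0`. Being
affine in `x`, the left side is maximal at an endpoint, which suggests threshold policies: rate `b`
(price `p_max`) up to `ℓ`, rate `a` (price `p_min`) after. Their value functions are explicit, and
comparing thresholds `ℓ` and `ℓ + 1` at a common level `M` changes `V 1` by a positive multiple
of the coefficient of `x` at state `ℓ + 1`. Hence at the first `ℓ` with `M_{ℓ+1} ≤ M_ℓ`, where
`M_ℓ` is the objective of the threshold-`ℓ` policy, `V` for `M = M_ℓ` satisfies the Bellman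
inequality and `p_0 - M + V 1 = 0`, so this policy is optimal. Such an `ℓ` exists:
`M_ℓ < M_{ℓ+1}` forces `M_ℓ < β/α - λ/α - w (ℓ + 1)`, which cannot hold for all `ℓ` along an
increasing sequence.
-/

open Filter Topology

lemma hseq_zero (ρ : ℕ → ℝ) : hseq ρ 0 = 1 := by simp [hseq]

lemma hseq_succ (ρ : ℕ → ℝ) (n : ℕ) : hseq ρ (n + 1) = hseq ρ n * ρ (n + 1) :=
  Finset.prod_Icc_succ_top (by omega) ρ

lemma hseq_nonneg {ρ : ℕ → ℝ} (hρ : ∀ i, 0 ≤ ρ i) (n : ℕ) : 0 ≤ hseq ρ n :=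
  Finset.prod_nonneg fun j _ => hρ j

lemma one_le_tsum_hseq {ρ : ℕ → ℝ} (hρ : ∀ i, 0 ≤ ρ i) (hs : Summable (hseq ρ)) :
    1 ≤ ∑' i, hseq ρ i :=
  hseq_zero ρ ▸ hs.le_tsum 0 fun j _ => hseq_nonneg hρ j

lemma summable_hseq_mul_of_mem_Icc {ρ q : ℕ → ℝ} {x y : ℝ} (hρ : ∀ i, 0 ≤ ρ i)
    (hs : Summable (hseq ρ)) (hq : ∀ i, q i ∈ Set.Icc x y) :
    Summable fun i => hseq ρ i * q i := by
  refine (hs.mul_right (max |x| |y|)).of_norm_bounded fun i => ?_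
  rw [Real.norm_eq_abs, abs_mul, abs_of_nonneg (hseq_nonneg hρ i)]
  exact mul_le_mul_of_nonneg_left (abs_le_max_abs_abs (hq i).1 (hq i).2) (hseq_nonneg hρ i)

lemma tendsto_hseq_mul_affine {ρ : ℕ → ℝ} (hs : Summable (hseq ρ))
    (hs' : Summable fun i : ℕ => (i : ℝ) * hseq ρ i) (A B : ℝ) :
    Tendsto (fun n : ℕ => hseq ρ n * (A + B * n)) atTop (𝓝 0) := by
  convert (hs.tendsto_atTop_zero.const_mul A).add (hs'.tendsto_atTop_zero.const_mul B) using 1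
  · funext n; ring
  · simp

noncomputable def relaxedObjective (w : ℝ) (ρ q : ℕ → ℝ) : ℝ :=
  (∑' i, hseq ρ i * q i - w * ∑' i : ℕ, (i : ℝ) * hseq ρ i) / ∑' i, hseq ρ i

lemma hasSum_hseq_mul_sub {ρ q : ℕ → ℝ} (w M : ℝ) (hρ : ∀ i, 0 ≤ ρ i)
    (hs : Summable (hseq ρ)) (hs' : Summable fun i : ℕ => (i : ℝ) * hseq ρ i)
    (hq : Summable fun i => hseq ρ i * q i) :
    HasSum (fun i => hseq ρ i * (q i - w * i - M))
      ((relaxedObjective w ρ q - M) * ∑' i, hseq ρ i) := by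
  have hS : (∑' i, hseq ρ i) ≠ 0 := (zero_lt_one.trans_le (one_le_tsum_hseq hρ hs)).ne'
  have hvalue : (relaxedObjective w ρ q - M) * ∑' i, hseq ρ i
      = ∑' i, hseq ρ i * q i - w * ∑' i : ℕ, (i : ℝ) * hseq ρ i - M * ∑' i, hseq ρ i := by
    rw [relaxedObjective]
    field_simp
  rw [hvalue]
  exact ((hq.hasSum.sub (hs'.hasSum.mul_left w)).sub (hs.hasSum.mul_left M)).congr_fun
    fun i => by ring

section Verification

variable {ρ q W : ℕ → ℝ} {w M : ℝ}

lemma sum_range_add_le (hρ : ∀ i, 0 ≤ ρ i)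
    (hW : ∀ k, 1 ≤ k → ρ k * (q k - w * k - M + W (k + 1)) ≤ W k) (n : ℕ) :
    ∑ i ∈ Finset.range (n + 1), hseq ρ i * (q i - w * i - M) + hseq ρ n * W (n + 1)
      ≤ q 0 - M + W 1 := by
  induction n with
  | zero => simp [hseq_zero]
  | succ n ih =>
    have step := mul_le_mul_of_nonneg_left (hW (n + 1) n.succ_pos) (hseq_nonneg hρ n)
    rw [Finset.sum_range_succ, hseq_succ]
    push_cast at step ⊢
    linear_combination ih + step

lemma sum_range_add_eq (hW : ∀ k, 1 ≤ k → ρ k * (q k - w * k - M + W (k + 1)) = W k)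
    (n : ℕ) :
    ∑ i ∈ Finset.range (n + 1), hseq ρ i * (q i - w * i - M) + hseq ρ n * W (n + 1)
      = q 0 - M + W 1 := by
  induction n with
  | zero => simp [hseq_zero]
  | succ n ih =>
    have step := hW (n + 1) n.succ_pos
    rw [Finset.sum_range_succ, hseq_succ]
    push_cast at step ⊢
    linear_combination ih + hseq ρ n * step

lemma tendsto_sum_range_add (hsum : Summable fun i => hseq ρ i * (q i - w * i - M))
    (htrans : Tendsto (fun n => hseq ρ n * W (n + 1)) atTop (𝓝 0)) :
    Tendsto (fun n => ∑ i ∈ Finset.range (n + 1), hseq ρ i * (q i - w * i - M)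
      + hseq ρ n * W (n + 1)) atTop (𝓝 (∑' i, hseq ρ i * (q i - w * i - M))) := by
  simpa using (hsum.hasSum.tendsto_sum_nat.comp (tendsto_add_atTop_nat 1)).add htrans

lemma tsum_le_of_bellman (hρ : ∀ i, 0 ≤ ρ i)
    (hW : ∀ k, 1 ≤ k → ρ k * (q k - w * k - M + W (k + 1)) ≤ W k)
    (hsum : Summable fun i => hseq ρ i * (q i - w * i - M))
    (htrans : Tendsto (fun n => hseq ρ n * W (n + 1)) atTop (𝓝 0)) :
    ∑' i, hseq ρ i * (q i - w * i - M) ≤ q 0 - M + W 1 :=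
  le_of_tendsto' (tendsto_sum_range_add hsum htrans) (sum_range_add_le hρ hW)

lemma tsum_eq_of_bellman (hW : ∀ k, 1 ≤ k → ρ k * (q k - w * k - M + W (k + 1)) = W k)
    (hsum : Summable fun i => hseq ρ i * (q i - w * i - M))
    (htrans : Tendsto (fun n => hseq ρ n * W (n + 1)) atTop (𝓝 0)) :
    ∑' i, hseq ρ i * (q i - w * i - M) = q 0 - M + W 1 :=
  tendsto_nhds_unique (tendsto_sum_range_add hsum htrans)
    (by simp only [sum_range_add_eq hW]; exact tendsto_const_nhds)

end Verification

def thresholdSeq (ℓ : ℕ) (x y : ℝ) (i : ℕ) : ℝ := if i ≤ ℓ then x else y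

lemma thresholdSeq_mem_Icc {x y : ℝ} (h : x ≤ y) (ℓ i : ℕ) :
    thresholdSeq ℓ y x i ∈ Set.Icc x y := by
  unfold thresholdSeq
  split_ifs
  exacts [⟨h, le_rfl⟩, ⟨le_rfl, h⟩]

lemma thresholdSeq_bangBang {x y : ℝ} (ℓ i : ℕ) :
    ((i : ℕ∞) < ℓ → thresholdSeq ℓ x y i = x) ∧ ((i : ℕ∞) = ℓ → thresholdSeq ℓ x y i = x) ∧
      ((ℓ : ℕ∞) < i → thresholdSeq ℓ x y i = y) := by
  simp only [Nat.cast_lt, Nat.cast_inj]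
  exact ⟨fun h => if_pos h.le, fun h => if_pos h.le, fun h => if_neg h.not_ge⟩

lemma hseq_thresholdSeq_add {a b : ℝ} (ℓ j : ℕ) :
    hseq (thresholdSeq ℓ b a) (j + ℓ) = b ^ ℓ * a ^ j := by
  induction j with
  | zero =>
    rw [zero_add, hseq, Finset.prod_congr rfl fun i hi =>
      show thresholdSeq ℓ b a i = b from if_pos (Finset.mem_Icc.1 hi).2,
      Finset.prod_const, Nat.card_Icc, Nat.add_sub_cancel, pow_zero, mul_one]
  | succ j ih =>
    rw [show j + 1 + ℓ = j + ℓ + 1 by ring, hseq_succ, ih, thresholdSeq, if_neg (by omega),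
      pow_succ]
    ring

lemma summable_hseq_thresholdSeq {a b : ℝ} (ha0 : 0 ≤ a) (ha1 : a < 1) (ℓ : ℕ) :
    Summable (hseq (thresholdSeq ℓ b a)) ∧
      Summable fun i : ℕ => (i : ℝ) * hseq (thresholdSeq ℓ b a) i := by
  have hgeom := summable_geometric_of_lt_one ha0 ha1
  have hgeom' : Summable fun j : ℕ => (j : ℝ) * a ^ j := by
    simpa using summable_pow_mul_geometric_of_norm_lt_one 1
      (by rwa [Real.norm_eq_abs, abs_of_nonneg ha0] : ‖a‖ < 1)
  refine ⟨(summable_nat_add_iff ℓ).1 ?_, (summable_nat_add_iff ℓ).1 ?_⟩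
  · simpa only [hseq_thresholdSeq_add] using hgeom.mul_left (b ^ ℓ)
  · simp only [hseq_thresholdSeq_add]
    refine ((hgeom'.mul_left (b ^ ℓ)).add (hgeom.mul_left (ℓ * b ^ ℓ))).congr fun j => ?_
    push_cast
    ring

section ThresholdValue

/- Rates range over `[a, b]`, and the price `q` at rate `ρ` satisfies `ρ * q = β' * ρ - κ`
(`β' = β / α`, `κ = λ / α`). `M` is the level in Dinkelbach's reformulation. -/
variable (a b β' κ w M : ℝ)

/-- The affine solution of `V k = a * (β' - w * k - M + V (k + 1)) - κ`: the value of using rate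
`a` for ever. -/
noncomputable def tailValue (k : ℕ) : ℝ :=
  (a * (β' - M) - κ) / (1 - a) - a * w / (1 - a) * (k + a / (1 - a))

/-- The coefficient of the rate `x` in the Bellman right-hand side
`x * (β' - w * k - M + V (k + 1)) - κ` for `V = tailValue`. -/
noncomputable def tailCoeff (k : ℕ) : ℝ := β' - w * k - M + tailValue a β' κ w M (k + 1)

noncomputable def switchValue : ℕ → ℕ → ℝ
  | 0, k => tailValue a β' κ w M k
  | n + 1, k => b * (β' - w * k - M + switchValue n (k + 1)) - κ

/-- From state `k`, the threshold-`ℓ` policy still uses rate `b` at the `ℓ + 1 - k` states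
`k, …, ℓ` (none if `ℓ < k`, by truncated subtraction). -/
noncomputable def thresholdValue (ℓ k : ℕ) : ℝ := switchValue a b β' κ w M (ℓ + 1 - k) k

variable {a b β' κ w M}

lemma tailValue_eq (ha : a ≠ 1) (k : ℕ) :
    tailValue a β' κ w M k = a * tailCoeff a β' κ w M k - κ := by
  have : 1 - a ≠ 0 := sub_ne_zero.2 ha.symm
  simp only [tailCoeff, tailValue]
  push_cast
  field_simp
  ring

lemma tailCoeff_eq (ha : a ≠ 1) (k : ℕ) :
    tailCoeff a β' κ w M k = β' - κ - M - w * k + a * tailCoeff a β' κ w M (k + 1) := by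
  rw [tailCoeff, tailValue_eq ha]
  ring

lemma tailCoeff_antitone (ha : a < 1) (hw : 0 ≤ w) : Antitone (tailCoeff a β' κ w M) := by
  refine antitone_nat_of_succ_le fun k => ?_
  have : 1 - a ≠ 0 := (sub_pos.2 ha).ne'
  have hslope : tailCoeff a β' κ w M (k + 1) = tailCoeff a β' κ w M k - w / (1 - a) := by
    simp only [tailCoeff, tailValue]
    push_cast
    field_simp
    ring
  rw [hslope]
  linarith [div_nonneg hw (sub_pos.2 ha).le]

lemma lt_of_tailCoeff_pos (ha0 : 0 ≤ a) (ha1 : a < 1) (hw : 0 ≤ w) {k : ℕ}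
    (hk : 0 < tailCoeff a β' κ w M k) : M < β' - κ - w * k := by
  have hdecr := mul_le_mul_of_nonneg_left
    (tailCoeff_antitone (β' := β') (κ := κ) (M := M) ha1 hw k.le_succ) ha0
  have := mul_pos (sub_pos.2 ha1) hk
  linarith [tailCoeff_eq (β' := β') (κ := κ) (w := w) (M := M) ha1.ne k]

lemma switchValue_succ_sub (ha : a ≠ 1) (n k : ℕ) :
    switchValue a b β' κ w M (n + 1) k - switchValue a b β' κ w M n k
      = b ^ n * (b - a) * tailCoeff a β' κ w M (k + n) := by
  induction n generalizing k with
  | zero =>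
    rw [switchValue, switchValue, switchValue, tailValue_eq ha k, add_zero, pow_zero, tailCoeff]
    ring
  | succ n ih =>
    have h := ih (k + 1)
    rw [show k + (n + 1) = k + 1 + n by ring, pow_succ]
    simp only [switchValue] at h ⊢
    linear_combination b * h

lemma switchValue_coeff_nonneg (hb : 0 ≤ b) (hw : 0 ≤ w) (n k : ℕ)
    (hc : 0 ≤ tailCoeff a β' κ w M (k + n)) (hd : 0 ≤ β' - κ - M - w * (k + n : ℕ)) :
    0 ≤ β' - w * k - M + switchValue a b β' κ w M n (k + 1) := by
  induction n generalizing k with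
  | zero => simpa [switchValue, tailCoeff] using hc
  | succ n ih =>
    rw [show k + (n + 1) = k + 1 + n by ring] at hc hd
    have hnext := ih (k + 1) hc hd
    have hdk : w * k ≤ w * (k + 1 + n : ℕ) :=
      mul_le_mul_of_nonneg_left (by exact_mod_cast (by omega : k ≤ k + 1 + n)) hw
    rw [switchValue]
    push_cast at hnext hd hdk ⊢
    linarith [mul_nonneg hb hnext]

lemma thresholdValue_of_lt {ℓ k : ℕ} (h : ℓ < k) :
    thresholdValue a b β' κ w M ℓ k = tailValue a β' κ w M k := by
  rw [thresholdValue, Nat.sub_eq_zero_of_le h, switchValue]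

lemma thresholdValue_eq (ha : a ≠ 1) (ℓ k : ℕ) :
    thresholdValue a b β' κ w M ℓ k
      = thresholdSeq ℓ b a k * (β' - w * k - M + thresholdValue a b β' κ w M ℓ (k + 1)) - κ := by
  rcases le_or_gt k ℓ with h | h
  · rw [thresholdSeq, if_pos h, thresholdValue, thresholdValue,
      show ℓ + 1 - k = ℓ + 1 - (k + 1) + 1 by omega, switchValue]
  · rw [thresholdSeq, if_neg h.not_ge, thresholdValue_of_lt h, thresholdValue_of_lt (by omega),
      tailValue_eq ha, tailCoeff]

lemma thresholdValue_succ (ha : a ≠ 1) (ℓ : ℕ) :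
    thresholdValue a b β' κ w M (ℓ + 1) 1
      = thresholdValue a b β' κ w M ℓ 1 + b ^ ℓ * (b - a) * tailCoeff a β' κ w M (ℓ + 1) := by
  have := switchValue_succ_sub (b := b) (β' := β') (κ := κ) (w := w) (M := M) ha ℓ 1
  rw [add_comm 1 ℓ] at this
  rw [thresholdValue, thresholdValue, Nat.add_sub_cancel, Nat.add_sub_cancel]
  linarith

/-- The threshold policy picks the better endpoint of `[a, b]`: the coefficient of the rate is
`≥ 0` at the states `k ≤ ℓ` and `≤ 0` after. -/
lemma thresholdValue_bellman (ha0 : 0 ≤ a) (ha1 : a < 1) (hb : 0 ≤ b) (hw : 0 ≤ w) {ℓ : ℕ}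
    (hstop : tailCoeff a β' κ w M (ℓ + 1) ≤ 0) (hgo : 1 ≤ ℓ → 0 ≤ tailCoeff a β' κ w M ℓ)
    {k : ℕ} (hk : 1 ≤ k) {x : ℝ} (hx : x ∈ Set.Icc a b) :
    x * (β' - w * k - M + thresholdValue a b β' κ w M ℓ (k + 1)) - κ
      ≤ thresholdValue a b β' κ w M ℓ k := by
  rw [thresholdValue_eq ha1.ne ℓ k, thresholdSeq]
  gcongr ?_ - κ
  split_ifs with h
  · refine mul_le_mul_of_nonneg_right hx.2 ?_
    have hd : 0 ≤ β' - κ - M - w * ℓ := by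
      nlinarith [tailCoeff_eq (β' := β') (κ := κ) (w := w) (M := M) ha1.ne ℓ, hgo (hk.trans h),
        mul_nonpos_of_nonneg_of_nonpos ha0 hstop]
    rw [thresholdValue, show ℓ + 1 - (k + 1) = ℓ - k by omega]
    exact switchValue_coeff_nonneg hb hw (ℓ - k) k
      (by rw [Nat.add_sub_cancel' h]; exact hgo (hk.trans h))
      (by rw [Nat.add_sub_cancel' h]; exact hd)
  · refine mul_le_mul_of_nonpos_right hx.1 ?_
    rw [thresholdValue_of_lt (by omega)]
    exact (tailCoeff_antitone ha1 hw (by omega : ℓ + 1 ≤ k)).trans hstop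

lemma tendsto_hseq_mul_thresholdValue {ρ : ℕ → ℝ} (hs : Summable (hseq ρ))
    (hs' : Summable fun i : ℕ => (i : ℝ) * hseq ρ i) (ℓ : ℕ) :
    Tendsto (fun n => hseq ρ n * thresholdValue a b β' κ w M ℓ (n + 1)) atTop (𝓝 0) := by
  refine (tendsto_hseq_mul_affine hs hs' (tailValue a β' κ w M 1)
    (-(a * w / (1 - a)))).congr' ?_
  filter_upwards [eventually_ge_atTop ℓ] with n hn
  rw [thresholdValue_of_lt (by omega), tailValue, tailValue]
  push_cast
  ring

end ThresholdValue

section ThresholdPolicy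

variable {a b β' κ w pmin pmax : ℝ}

variable (a b w pmin pmax) in
noncomputable def thresholdObjective (ℓ : ℕ) : ℝ :=
  relaxedObjective w (thresholdSeq ℓ b a) (thresholdSeq ℓ pmax pmin)

lemma thresholdSeq_mul_eq (hpmin : a * pmin = β' * a - κ) (hpmax : b * pmax = β' * b - κ)
    (ℓ i : ℕ) :
    thresholdSeq ℓ b a i * thresholdSeq ℓ pmax pmin i = β' * thresholdSeq ℓ b a i - κ := by
  unfold thresholdSeq
  split_ifs <;> linarith

lemma one_le_tsum_hseq_thresholdSeq (ha0 : 0 ≤ a) (ha1 : a < 1) (hab : a ≤ b) (ℓ : ℕ) :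
    1 ≤ ∑' i, hseq (thresholdSeq ℓ b a) i :=
  one_le_tsum_hseq (fun i => ha0.trans (thresholdSeq_mem_Icc hab ℓ i).1)
    (summable_hseq_thresholdSeq ha0 ha1 ℓ).1

/-- The Bellman inequality of `thresholdValue` is an equality along the threshold policy. -/
lemma thresholdObjective_sub_mul (ha0 : 0 ≤ a) (ha1 : a < 1) (hab : a ≤ b) (hp : pmin ≤ pmax)
    (hpmin : a * pmin = β' * a - κ) (hpmax : b * pmax = β' * b - κ) (M : ℝ) (ℓ : ℕ) :
    (thresholdObjective a b w pmin pmax ℓ - M) * ∑' i, hseq (thresholdSeq ℓ b a) i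
      = pmax - M + thresholdValue a b β' κ w M ℓ 1 := by
  have hρ : ∀ i, 0 ≤ thresholdSeq ℓ b a i := fun i => ha0.trans (thresholdSeq_mem_Icc hab ℓ i).1
  obtain ⟨hs, hs'⟩ := summable_hseq_thresholdSeq (b := b) ha0 ha1 ℓ
  have hsum := hasSum_hseq_mul_sub w M hρ hs hs'
    (summable_hseq_mul_of_mem_Icc hρ hs (thresholdSeq_mem_Icc hp ℓ))
  rw [thresholdObjective, ← hsum.tsum_eq, tsum_eq_of_bellman (fun k _ => ?_) hsum.summable
    (tendsto_hseq_mul_thresholdValue hs hs' ℓ), thresholdSeq, if_pos (Nat.zero_le ℓ)]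
  rw [thresholdValue_eq ha1.ne ℓ k]
  linear_combination thresholdSeq_mul_eq hpmin hpmax ℓ k

lemma thresholdObjective_succ_sub_mul (ha0 : 0 ≤ a) (ha1 : a < 1) (hab : a ≤ b)
    (hp : pmin ≤ pmax) (hpmin : a * pmin = β' * a - κ) (hpmax : b * pmax = β' * b - κ)
    (M : ℝ) (ℓ : ℕ) :
    (thresholdObjective a b w pmin pmax (ℓ + 1) - M) * ∑' i, hseq (thresholdSeq (ℓ + 1) b a) i
      = (thresholdObjective a b w pmin pmax ℓ - M) * ∑' i, hseq (thresholdSeq ℓ b a) i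
        + b ^ ℓ * (b - a) * tailCoeff a β' κ w M (ℓ + 1) := by
  rw [thresholdObjective_sub_mul ha0 ha1 hab hp hpmin hpmax,
    thresholdObjective_sub_mul ha0 ha1 hab hp hpmin hpmax, thresholdValue_succ ha1.ne]
  ring

lemma exists_thresholdObjective_succ_le (ha0 : 0 ≤ a) (ha1 : a < 1) (hab : a < b) (hw : 0 < w)
    (hp : pmin ≤ pmax) (hpmin : a * pmin = β' * a - κ) (hpmax : b * pmax = β' * b - κ) :
    ∃ ℓ, thresholdObjective a b w pmin pmax (ℓ + 1) ≤ thresholdObjective a b w pmin pmax ℓ := by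
  by_contra! hinc
  obtain ⟨n, hn⟩ := exists_nat_gt ((β' - κ - thresholdObjective a b w pmin pmax 0) / w)
  have hgain := thresholdObjective_succ_sub_mul (β' := β') (κ := κ) (w := w) ha0 ha1 hab.le hp
    hpmin hpmax (thresholdObjective a b w pmin pmax n) n
  rw [sub_self, zero_mul, zero_add] at hgain
  have hpos : 0 < tailCoeff a β' κ w (thresholdObjective a b w pmin pmax n) (n + 1) := by
    refine pos_of_mul_pos_right (hgain ▸ mul_pos (sub_pos.2 (hinc n)) ?_)
      (mul_pos (pow_pos (ha0.trans_lt hab) n) (sub_pos.2 hab)).le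
    exact zero_lt_one.trans_le (one_le_tsum_hseq_thresholdSeq ha0 ha1 hab.le _)
  have hlt := lt_of_tailCoeff_pos ha0 ha1 hw.le hpos
  have hmono := (strictMono_nat_of_lt_succ hinc).monotone (Nat.zero_le n)
  rw [div_lt_iff₀ hw] at hn
  push_cast at hlt
  linarith

lemma exists_threshold_bellman (ha0 : 0 ≤ a) (ha1 : a < 1) (hab : a < b) (hw : 0 < w)
    (hp : pmin ≤ pmax) (hpmin : a * pmin = β' * a - κ) (hpmax : b * pmax = β' * b - κ) :
    ∃ ℓ, tailCoeff a β' κ w (thresholdObjective a b w pmin pmax ℓ) (ℓ + 1) ≤ 0 ∧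
      (1 ≤ ℓ → 0 ≤ tailCoeff a β' κ w (thresholdObjective a b w pmin pmax ℓ) ℓ) := by
  classical
  have hex := exists_thresholdObjective_succ_le (β' := β') (κ := κ) ha0 ha1 hab hw hp hpmin hpmax
  have hgain := thresholdObjective_succ_sub_mul (β' := β') (κ := κ) (w := w) ha0 ha1 hab.le hp
    hpmin hpmax
  have hweight : ∀ n : ℕ, 0 < b ^ n * (b - a) :=
    fun n => mul_pos (pow_pos (ha0.trans_lt hab) n) (sub_pos.2 hab)
  have hS := one_le_tsum_hseq_thresholdSeq ha0 ha1 hab.le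
  refine ⟨Nat.find hex, ?_, fun hL => ?_⟩
  · set L := Nat.find hex
    have h := hgain (thresholdObjective a b w pmin pmax L) L
    rw [sub_self, zero_mul, zero_add] at h
    refine nonpos_of_mul_nonpos_right (h ▸ mul_nonpos_of_nonpos_of_nonneg ?_ ?_) (hweight L)
    · exact sub_nonpos.2 (Nat.find_spec hex)
    · exact zero_le_one.trans (hS _)
  · obtain ⟨m, hm⟩ : ∃ m, Nat.find hex = m + 1 := ⟨Nat.find hex - 1, by omega⟩
    have hlt := lt_of_not_ge (Nat.find_min hex (by omega : m < Nat.find hex))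
    have h := hgain (thresholdObjective a b w pmin pmax (m + 1)) m
    rw [sub_self, zero_mul] at h
    rw [hm]
    refine (pos_of_mul_pos_right ?_ (hweight m).le).le
    nlinarith [mul_pos (sub_pos.2 hlt) (zero_lt_one.trans_le (hS m))]

theorem exists_thresholdObjective_ge (ha0 : 0 ≤ a) (ha1 : a < 1) (hab : a < b) (hw : 0 < w)
    (hp : pmin ≤ pmax) (hpmin : a * pmin = β' * a - κ) (hpmax : b * pmax = β' * b - κ) :
    ∃ ℓ, ∀ ρ q : ℕ → ℝ, (∀ i, ρ i ∈ Set.Icc a b) → (∀ i, q i ∈ Set.Icc pmin pmax) →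
      (∀ i, ρ i * q i = β' * ρ i - κ) → q 0 = pmax → Summable (hseq ρ) →
      Summable (fun i : ℕ => (i : ℝ) * hseq ρ i) →
      relaxedObjective w ρ q ≤ thresholdObjective a b w pmin pmax ℓ := by
  obtain ⟨ℓ, hstop, hgo⟩ :=
    exists_threshold_bellman (β' := β') (κ := κ) ha0 ha1 hab hw hp hpmin hpmax
  refine ⟨ℓ, fun ρ q hρ hq hρq hq0 hs hs' => ?_⟩
  set M := thresholdObjective a b w pmin pmax ℓ
  have hρ0 : ∀ i, 0 ≤ ρ i := fun i => ha0.trans (hρ i).1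
  have hsum := hasSum_hseq_mul_sub w M hρ0 hs hs' (summable_hseq_mul_of_mem_Icc hρ0 hs hq)
  have hle := tsum_le_of_bellman hρ0 (fun k hk => ?_) hsum.summable
    (tendsto_hseq_mul_thresholdValue (a := a) (b := b) (β' := β') (κ := κ) (w := w) (M := M)
      hs hs' ℓ)
  · rw [hsum.tsum_eq, hq0, ← thresholdObjective_sub_mul ha0 ha1 hab.le hp hpmin hpmax, sub_self,
      zero_mul] at hle
    exact sub_nonpos.1 (nonpos_of_mul_nonpos_left hle
      (zero_lt_one.trans_le (one_le_tsum_hseq hρ0 hs)))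
  · linarith [hρq k, thresholdValue_bellman ha0 ha1 (ha0.trans hab.le) hw.le hstop hgo hk (hρ k)]

end ThresholdPolicy

section Model

variable {lam beta alpha wt pmin pmax : ℝ} {p : ℕ → ℝ}

lemma rhoOf_mem_Icc {i : ℕ} (hlam : 0 < lam) (halpha : 0 < alpha)
    (hmumin : 0 < beta - alpha * pmax) (hp : p i ∈ Set.Icc pmin pmax) :
    rhoOf lam beta alpha p i
      ∈ Set.Icc (lam / (beta - alpha * pmin)) (lam / (beta - alpha * pmax)) := by
  have h1 : beta - alpha * pmax ≤ beta - alpha * p i := by nlinarith [hp.2]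
  have h2 : beta - alpha * p i ≤ beta - alpha * pmin := by nlinarith [hp.1]
  exact ⟨div_le_div_of_nonneg_left hlam.le (hmumin.trans_le h1) h2,
    div_le_div_of_nonneg_left hlam.le hmumin h1⟩

lemma rhoOf_mul_self {i : ℕ} (halpha : alpha ≠ 0) (hp : beta - alpha * p i ≠ 0) :
    rhoOf lam beta alpha p i * p i = beta / alpha * rhoOf lam beta alpha p i - lam / alpha := by
  unfold rhoOf
  field_simp
  ring

lemma rhoOf_thresholdSeq (ℓ : ℕ) (x y : ℝ) :
    rhoOf lam beta alpha (thresholdSeq ℓ x y)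
      = thresholdSeq ℓ (lam / (beta - alpha * x)) (lam / (beta - alpha * y)) := by
  funext i
  unfold rhoOf thresholdSeq
  split_ifs <;> rfl

lemma tsum_piseq_mul (ρ q : ℕ → ℝ) :
    ∑' i, piseq ρ i * q i = (∑' i, hseq ρ i * q i) / ∑' i, hseq ρ i := by
  simp only [piseq, div_mul_eq_mul_div, tsum_div_const]

lemma CrelE_eq_relaxedObjective (hw : 0 ≤ wt / lam) (hρ : ∀ i, 0 ≤ rhoOf lam beta alpha p i)
    (hs' : Summable fun i : ℕ => (i : ℝ) * hseq (rhoOf lam beta alpha p) i) :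
    CrelE lam beta alpha wt p = relaxedObjective (wt / lam) (rhoOf lam beta alpha p) p := by
  rw [CrelE, relaxedObjective, tsum_piseq_mul]
  generalize rhoOf lam beta alpha p = ρ at hρ hs' ⊢
  have hπ : ∀ i : ℕ, 0 ≤ (i : ℝ) * piseq ρ i := fun i =>
    mul_nonneg i.cast_nonneg (div_nonneg (hseq_nonneg hρ i) (tsum_nonneg (hseq_nonneg hρ)))
  have hπs : Summable fun i : ℕ => (i : ℝ) * piseq ρ i := by
    simpa only [piseq, mul_div_assoc'] using hs'.div_const _
  rw [← ENNReal.ofReal_tsum_of_nonneg hπ hπs, ← ENNReal.ofReal_mul hw, EReal.coe_ennreal_ofReal,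
    max_eq_left (mul_nonneg hw (tsum_nonneg hπ)), ← EReal.coe_sub]
  simp only [piseq, mul_div_assoc', tsum_div_const, sub_div]

lemma CrelE_eq_bot (hw : 0 < wt / lam) (hρ : ∀ i, 0 ≤ rhoOf lam beta alpha p i)
    (hs : Summable (hseq (rhoOf lam beta alpha p)))
    (hs' : ¬ Summable fun i : ℕ => (i : ℝ) * hseq (rhoOf lam beta alpha p) i) :
    CrelE lam beta alpha wt p = ⊥ := by
  rw [CrelE]
  generalize rhoOf lam beta alpha p = ρ at hρ hs hs' ⊢
  have hS := (zero_lt_one.trans_le (one_le_tsum_hseq hρ hs)).ne'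
  have hπ : ∀ i : ℕ, 0 ≤ (i : ℝ) * piseq ρ i := fun i =>
    mul_nonneg i.cast_nonneg (div_nonneg (hseq_nonneg hρ i) (tsum_nonneg (hseq_nonneg hρ)))
  have hπs : ¬ Summable fun i : ℕ => (i : ℝ) * piseq ρ i := by
    simpa only [piseq, mul_div_assoc', summable_div_const_iff hS] using hs'
  have htop : ∑' i : ℕ, ENNReal.ofReal ((i : ℝ) * piseq ρ i) = ⊤ := by
    by_contra h
    exact hπs ((ENNReal.summable_toReal h).congr fun i => ENNReal.toReal_ofReal (hπ i))
  rw [htop, ENNReal.mul_top (ENNReal.ofReal_pos.2 hw).ne', EReal.coe_ennreal_top, EReal.sub_top]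

lemma admissible_thresholdSeq (hlam : 0 < lam) (hmumax : lam < beta - alpha * pmin)
    (hp : pmin ≤ pmax) (ℓ : ℕ) :
    Admissible lam beta alpha pmin pmax (thresholdSeq ℓ pmax pmin) := by
  refine ⟨thresholdSeq_mem_Icc hp ℓ, if_pos ℓ.zero_le, ?_⟩
  rw [rhoOf_thresholdSeq]
  exact (summable_hseq_thresholdSeq (div_nonneg hlam.le (hlam.trans hmumax).le)
    ((div_lt_one (hlam.trans hmumax)).2 hmumax) ℓ).1

lemma exists_thresholdSeq_CrelE_ge (hlam : 0 < lam) (halpha : 0 < alpha) (hwt : 0 < wt)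
    (hp : pmin < pmax) (hmumax : lam < beta - alpha * pmin)
    (hmumin : 0 < beta - alpha * pmax) :
    ∃ ℓ : ℕ, ∀ q, Admissible lam beta alpha pmin pmax q →
      CrelE lam beta alpha wt q ≤ CrelE lam beta alpha wt (thresholdSeq ℓ pmax pmin) := by
  set a := lam / (beta - alpha * pmin)
  set b := lam / (beta - alpha * pmax)
  have ha0 : 0 ≤ a := div_nonneg hlam.le (hlam.trans hmumax).le
  have ha1 : a < 1 := (div_lt_one (hlam.trans hmumax)).2 hmumax
  have hab : a < b := div_lt_div_of_pos_left hlam hmumin (by nlinarith)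
  have hw : 0 < wt / lam := div_pos hwt hlam
  have hpmin : a * pmin = beta / alpha * a - lam / alpha :=
    rhoOf_mul_self (lam := lam) (p := fun _ => pmin) (i := 0) halpha.ne' (hlam.trans hmumax).ne'
  have hpmax : b * pmax = beta / alpha * b - lam / alpha :=
    rhoOf_mul_self (lam := lam) (p := fun _ => pmax) (i := 0) halpha.ne' hmumin.ne'
  obtain ⟨ℓ, hℓ⟩ := exists_thresholdObjective_ge ha0 ha1 hab hw hp.le hpmin hpmax
  refine ⟨ℓ, fun q ⟨hq, hq0, hqs⟩ => ?_⟩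
  have hρ i : rhoOf lam beta alpha q i ∈ Set.Icc a b := rhoOf_mem_Icc hlam halpha hmumin (hq i)
  have hρ0 i : 0 ≤ rhoOf lam beta alpha q i := ha0.trans (hρ i).1
  by_cases hqs' : Summable fun i : ℕ => (i : ℝ) * hseq (rhoOf lam beta alpha q) i
  · have hρℓ : rhoOf lam beta alpha (thresholdSeq ℓ pmax pmin) = thresholdSeq ℓ b a :=
      rhoOf_thresholdSeq ℓ pmax pmin
    rw [CrelE_eq_relaxedObjective hw.le hρ0 hqs', CrelE_eq_relaxedObjective hw.le
      (hρℓ ▸ fun i => ha0.trans (thresholdSeq_mem_Icc hab.le ℓ i).1)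
      (hρℓ ▸ (summable_hseq_thresholdSeq ha0 ha1 ℓ).2), hρℓ]
    exact EReal.coe_le_coe_iff.2 (hℓ _ _ hρ hq
      (fun i => rhoOf_mul_self halpha.ne' (by nlinarith [(hq i).2])) hq0 hqs hqs')
  · rw [CrelE_eq_bot hw hρ0 hqs hqs']
    exact bot_le

end Model

theorem stmt1_general
    (lam alpha beta wt pmin pmax : ℝ)
    (hlam : 0 < lam) (halpha : 0 < alpha) (hwt : 0 < wt)
    (hpminmax : pmin < pmax)
    (hmumax : lam < beta - alpha * pmin)
    (hmumin : 0 < beta - alpha * pmax) :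
    ∃ popt : ℕ → ℝ, Admissible lam beta alpha pmin pmax popt ∧
      (∃ ℓ : ℕ∞, ∃ pstar ∈ Set.Icc pmin pmax, ∀ i : ℕ, 1 ≤ i →
        (((i : ℕ∞) < ℓ → popt i = pmax) ∧
         ((i : ℕ∞) = ℓ → popt i = pstar) ∧
         (ℓ < (i : ℕ∞) → popt i = pmin))) ∧
      ∀ q : ℕ → ℝ, Admissible lam beta alpha pmin pmax q →
        CrelE lam beta alpha wt q ≤ CrelE lam beta alpha wt popt := by
  obtain ⟨ℓ, hℓ⟩ := exists_thresholdSeq_CrelE_ge hlam halpha hwt hpminmax hmumax hmumin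
  exact ⟨thresholdSeq ℓ pmax pmin, admissible_thresholdSeq hlam hmumax hpminmax.le ℓ,
    ⟨ℓ, pmax, ⟨hpminmax.le, le_rfl⟩, fun i _ => thresholdSeq_bangBang ℓ i⟩, hℓ⟩

/-- Under Assumption 1 (linear price sensitivity), there exists
a pricing policy maximizing the relaxed objective `C_rel` over all
positive-recurrent policies with values in `[p_min, p_max]` (and `p_0 = p_max`)
that has bang-bang form: for some `ℓ* ∈ ℕ ∪ {∞}` and `p* ∈ [p_min, p_max]`,
`p_i = p_max` for `i < ℓ*`, `p_i = p*` for `i = ℓ*`, and `p_i = p_min` for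
`i > ℓ*`. -/
theorem stmt1
    (lam alpha beta wt pmin pmax : ℝ)
    (hlam : 0 < lam) (halpha : 0 < alpha) (hbeta : 0 < beta) (hwt : 0 < wt)
    (hpmin : 0 < pmin) (hpminmax : pmin < pmax)
    (hmumax : lam < beta - alpha * pmin)
    (hmumin : 0 < beta - alpha * pmax) :
    ∃ popt : ℕ → ℝ, Admissible lam beta alpha pmin pmax popt ∧
      (∃ ℓ : ℕ∞, ∃ pstar ∈ Set.Icc pmin pmax, ∀ i : ℕ, 1 ≤ i →
        (((i : ℕ∞) < ℓ → popt i = pmax) ∧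
         ((i : ℕ∞) = ℓ → popt i = pstar) ∧
         (ℓ < (i : ℕ∞) → popt i = pmin))) ∧
      ∀ q : ℕ → ℝ, Admissible lam beta alpha pmin pmax q →
        CrelE lam beta alpha wt q ≤ CrelE lam beta alpha wt popt :=
  stmt1_general lam alpha beta wt pmin pmax hlam halpha hwt hpminmax hmumax hmumin
end

section
/- Let C > 0 and let (ρ_k)_{k≥1} be positive reals such that h_j = ∏_{k=1}^j ρ_k satisfies ∑_{j=0}^∞ (j − C) h_j = 0 with absolute convergence. Then for every i ≥ 1, (i + 1 − C) + ∑_{j≥i+2} (j − C) ∏_{k=i+2}^{j} ρ_k > 0. -/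
open Finset

theorem tsum_nat_add_pos_of_neg_of_pos {f : ℕ → ℝ} {c : ℝ} (hf : Summable f)
    (hf0 : ∑' j, f j = 0) (hneg : ∀ j : ℕ, (j : ℝ) < c → f j < 0)
    (hpos : ∀ j : ℕ, c < j → 0 < f j) {n : ℕ} (hn : 0 < n) :
    0 < ∑' m, f (m + n) := by
  obtain ⟨k, rfl⟩ : ∃ k, n = k + 1 := ⟨n - 1, by omega⟩
  rcases lt_or_ge (k : ℝ) c with hk | hk
  · have hhead : ∑ j ∈ range (k + 1), f j < 0 :=
      sum_neg (fun j hj => hneg j (lt_of_le_of_lt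
        (by exact_mod_cast Nat.lt_succ_iff.mp (mem_range.mp hj)) hk)) nonempty_range_add_one
    linarith [hf.sum_add_tsum_nat_add (k + 1)]
  · have hlt : ∀ m : ℕ, c < ((m + (k + 1) : ℕ) : ℝ) := fun m => by
      push_cast; linarith [(m.cast_nonneg : (0 : ℝ) ≤ m)]
    exact ((summable_nat_add_iff (k + 1)).2 hf).tsum_pos (fun m => (hpos _ (hlt m)).le) 0
      (hpos _ (hlt 0))

section hseq

variable {ρ : ℕ → ℝ}

theorem hseq_pos (hρ : ∀ k : ℕ, 1 ≤ k → 0 < ρ k) (j : ℕ) : 0 < hseq ρ j :=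
  prod_pos fun k hk => hρ k (mem_Icc.mp hk).1

theorem hseq_mul_prod_Icc {a b : ℕ} (hab : a ≤ b) :
    hseq ρ a * ∏ k ∈ Icc (a + 1) b, ρ k = hseq ρ b := by
  rw [hseq, hseq, Icc_add_one_left_eq_Ioc, ← zero_add 1, Icc_add_one_left_eq_Ioc]
  exact prod_Ioc_consecutive ρ (Nat.zero_le a) hab

end hseq

theorem stmt7_general (C : ℝ) (ρ : ℕ → ℝ)
    (hρ : ∀ k : ℕ, 1 ≤ k → 0 < ρ k)
    (hsum : Summable (fun j : ℕ => ((j : ℝ) - C) * hseq ρ j))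
    (hzero : (∑' j : ℕ, ((j : ℝ) - C) * hseq ρ j) = 0)
    (i : ℕ) :
    0 < ((i : ℝ) + 1 - C) +
      ∑' m : ℕ, (((i : ℝ) + 2 + (m : ℝ)) - C) *
        ∏ k ∈ Finset.Icc (i + 2) (i + 2 + m), ρ k := by
  have hh := hseq_pos hρ
  have htail : 0 < ∑' m, ((((m + (i + 1) : ℕ) : ℝ) - C) * hseq ρ (m + (i + 1))) :=
    tsum_nat_add_pos_of_neg_of_pos (c := C) hsum hzero
      (fun j hj => mul_neg_of_neg_of_pos (by linarith) (hh j))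
      (fun j hj => mul_pos (by linarith) (hh j)) i.succ_pos
  have hterm : ∀ m : ℕ, (((m + 1 + (i + 1) : ℕ) : ℝ) - C) * hseq ρ (m + 1 + (i + 1)) =
      hseq ρ (i + 1) *
        ((((i : ℝ) + 2 + (m : ℝ)) - C) * ∏ k ∈ Icc (i + 2) (i + 2 + m), ρ k) := fun m => by
    rw [← hseq_mul_prod_Icc (by omega : i + 1 ≤ m + 1 + (i + 1)),
      show m + 1 + (i + 1) = i + 2 + m by omega]
    push_cast
    ring
  rw [((summable_nat_add_iff (i + 1)).2 hsum).tsum_eq_zero_add, tsum_congr hterm,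
    tsum_mul_left, zero_add] at htail
  refine pos_of_mul_pos_right (a := hseq ρ (i + 1)) (htail.trans_eq ?_) (hh _).le
  push_cast
  ring

/-- Let `C > 0` and `(ρ_k)_{k≥1}` be positive reals such that
`h_j = ∏_{k=1}^j ρ_k` satisfies `∑_j (j - C) h_j = 0` (a convergent, hence
absolutely convergent, series of reals). Then for every `i ≥ 1`,
`(i + 1 - C) + ∑_{j ≥ i+2} (j - C) ∏_{k=i+2}^j ρ_k > 0`. -/
theorem stmt7 (C : ℝ) (hC : 0 < C) (ρ : ℕ → ℝ)
    (hρ : ∀ k : ℕ, 1 ≤ k → 0 < ρ k)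
    (hsum : Summable (fun j : ℕ => ((j : ℝ) - C) * hseq ρ j))
    (hzero : (∑' j : ℕ, ((j : ℝ) - C) * hseq ρ j) = 0)
    (i : ℕ) (hi : 1 ≤ i) :
    0 < ((i : ℝ) + 1 - C) +
      ∑' m : ℕ, (((i : ℝ) + 2 + (m : ℝ)) - C) *
        ∏ k ∈ Finset.Icc (i + 2) (i + 2 + m), ρ k :=
  stmt7_general C ρ hρ hsum hzero i
end
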